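/- Let N be a finite set with at least two elements, let σ > 0, let (μ_n)_{n∈N} be pairwise distinct real numbers, let (p_n)_{n∈N} be strictly positive weights, and let (γ_{n,n'})_{n,n'∈N} be nonnegative loss parameters. Define the Gaussian density φ_{μ,σ}(s) = (2πσ²)^{-1/2} exp(−(s−μ)²/(2σ²)), the MAP decision region R_{n'} = { s ∈ ℝ : p_{n'}·φ_{μ_{n'},σ}(s) ≥ p_m·φ_{μ_m,σ}(s) for all m ∈ N }, the standard normal tail Q(x) = ∫_x^∞ (2π)^{-1/2} e^{−t²/2} dt, and d_{n,n'} = ((μ_{n'}−μ_n)² − 2σ² ln(p_{n'}/p_n)) / (2σ·|μ_{n'}−μ_n|) for n ≠ n'. Then Σ_{n∈N} p_n Σ_{n'∈N, n'≠n} γ_{n,n'} · ν_n(R_{n'}) ≤ Σ_{n∈N} p_n Σ_{n'∈N, n'≠n} γ_{n,n'} · Q(d_{n,n'}), where ν_n denotes the Gaussian measure N(μ_n, σ²) on ℝ. -/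

import Mathlib

open MeasureTheory ProbabilityTheory

/-- The Gaussian density with mean `μ` and standard deviation `σ`. -/
noncomputable def gaussianDensity (μ σ s : ℝ) : ℝ :=
  (Real.sqrt (2 * Real.pi * σ ^ 2))⁻¹ * Real.exp (-(s - μ) ^ 2 / (2 * σ ^ 2))

/-- The standard normal tail function `Q(x) = ∫_x^∞ (2π)^{-1/2} e^{−t²/2} dt`. -/
noncomputable def stdNormalTail (x : ℝ) : ℝ :=
  ∫ t in Set.Ioi x, (Real.sqrt (2 * Real.pi))⁻¹ * Real.exp (-t ^ 2 / 2)

/-!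
Since `R n'` is contained in the pairwise region `{s | p n φ_n(s) ≤ p n' φ_{n'}(s)}`, it suffices
to compute the `ν_n`-measure of the latter. Taking logarithms, the pairwise comparison is the
affine condition `d ≤ c (s - μ n)` with `c = (μ n' - μ n) / (σ |μ n' - μ n|)`, and since `c² σ² = 1`
the image of `ν_n` under `s ↦ c (s - μ n)` is the standard normal law, so that region has measure
exactly `Q d`.
-/

open Set

theorem stdNormalTail_eq_gaussianReal_Ici (x : ℝ) :
    stdNormalTail x = (gaussianReal 0 1 (Ici x)).toReal := by
  rw [gaussianReal_apply_eq_integral 0 one_ne_zero,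
    ENNReal.toReal_ofReal
      (setIntegral_nonneg measurableSet_Ici fun t _ ↦ gaussianPDFReal_nonneg _ _ _),
    integral_Ici_eq_integral_Ioi, stdNormalTail]
  simp [gaussianPDFReal]

theorem gaussianReal_map_mul_sub_self {m c : ℝ} {v : NNReal} (hc : c ^ 2 * v = 1) :
    (gaussianReal m v).map (fun s ↦ c * (s - m)) = gaussianReal 0 1 := by
  rw [show (fun s ↦ c * (s - m)) = (c * ·) ∘ (· - m) from rfl,
    ← Measure.map_map (by fun_prop) (by fun_prop), gaussianReal_map_sub_const,
    gaussianReal_map_const_mul, sub_self, mul_zero]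
  congr
  ext
  simpa using hc

theorem gaussianReal_setOf_le_mul_sub_self {m c : ℝ} {v : NNReal} (hc : c ^ 2 * v = 1) (x : ℝ) :
    (gaussianReal m v {s | x ≤ c * (s - m)}).toReal = stdNormalTail x := by
  rw [stdNormalTail_eq_gaussianReal_Ici, ← gaussianReal_map_mul_sub_self hc,
    Measure.map_apply (by fun_prop : Measurable fun s ↦ c * (s - m)) measurableSet_Ici]
  rfl

theorem mul_gaussianDensity_le_mul_iff {σ m₁ m₂ q₁ q₂ : ℝ} (hσ : σ ≠ 0) (hq₁ : 0 < q₁)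
    (hq₂ : 0 < q₂) (s : ℝ) :
    q₁ * gaussianDensity m₁ σ s ≤ q₂ * gaussianDensity m₂ σ s ↔
      (m₂ - m₁) ^ 2 - 2 * σ ^ 2 * Real.log (q₂ / q₁) ≤ 2 * (m₂ - m₁) * (s - m₁) := by
  have hnorm : 0 < (Real.sqrt (2 * Real.pi * σ ^ 2))⁻¹ := by positivity
  have hσ2 : 0 < 2 * σ ^ 2 := by positivity
  simp only [gaussianDensity, mul_left_comm _ (Real.sqrt _)⁻¹, mul_le_mul_iff_right₀ hnorm]
  have mul_exp : ∀ {q : ℝ} (a : ℝ), 0 < q → q * Real.exp a = Real.exp (Real.log q + a) :=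
    fun a hq ↦ by rw [Real.exp_add, Real.exp_log hq]
  rw [mul_exp _ hq₁, mul_exp _ hq₂, Real.exp_le_exp, Real.log_div hq₂.ne' hq₁.ne', ← sub_nonneg,
    ← sub_nonneg (b := _ - _), ← mul_nonneg_iff_of_pos_left hσ2]
  congr! 1
  field_simp
  ring

theorem gaussianReal_setOf_mul_gaussianDensity_le {σ m₁ m₂ q₁ q₂ : ℝ} (hσ : 0 < σ) (hm : m₁ ≠ m₂)
    (hq₁ : 0 < q₁) (hq₂ : 0 < q₂) :
    (gaussianReal m₁ ⟨σ ^ 2, sq_nonneg σ⟩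
        {s | q₁ * gaussianDensity m₁ σ s ≤ q₂ * gaussianDensity m₂ σ s}).toReal =
      stdNormalTail (((m₂ - m₁) ^ 2 - 2 * σ ^ 2 * Real.log (q₂ / q₁)) / (2 * σ * |m₂ - m₁|)) := by
  have hscale : 0 < 2 * σ * |m₂ - m₁| := by
    have := abs_pos.mpr (sub_ne_zero.mpr hm.symm)
    positivity
  set c := (m₂ - m₁) / (σ * |m₂ - m₁|)
  have hc : c ^ 2 * (⟨σ ^ 2, sq_nonneg σ⟩ : NNReal) = 1 := by
    simp only [c, div_pow, mul_pow, sq_abs]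
    field_simp
  rw [← gaussianReal_setOf_le_mul_sub_self hc]
  congr with s
  rw [mul_gaussianDensity_le_mul_iff hσ.ne' hq₁ hq₂,
    ← div_le_div_iff_of_pos_right hscale]
  congr! 1
  simp only [c]
  field_simp

theorem union_bound_approximate_loss_general
    {N : Type*} [Fintype N] [DecidableEq N]
    (σ : ℝ) (hσ : 0 < σ)
    (μ : N → ℝ) (hμ : Function.Injective μ)
    (p : N → ℝ) (hp : ∀ n, 0 < p n)
    (γ : N → N → ℝ) (hγ : ∀ n n', 0 ≤ γ n n')
    (R : N → Set ℝ)
    (hR : ∀ n', R n' = {s : ℝ | ∀ m : N,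
      p m * gaussianDensity (μ m) σ s ≤ p n' * gaussianDensity (μ n') σ s})
    (d : N → N → ℝ)
    (hd : ∀ n n', n ≠ n' →
      d n n' = ((μ n' - μ n) ^ 2 - 2 * σ ^ 2 * Real.log (p n' / p n)) /
        (2 * σ * |μ n' - μ n|)) :
    ∑ n : N, p n * ∑ n' ∈ Finset.univ \ {n}, γ n n' *
        ((gaussianReal (μ n) ⟨σ ^ 2, sq_nonneg σ⟩) (R n')).toReal ≤
      ∑ n : N, p n * ∑ n' ∈ Finset.univ \ {n}, γ n n' * stdNormalTail (d n n') := by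
  gcongr ∑ n, p n * ∑ n' ∈ _, γ n n' * ?_ with n _ n' hn'
  · exact (hp n).le
  · exact hγ n n'
  have hne : n ≠ n' := by simpa [eq_comm] using hn'
  -- instance search does not unfold the anonymous `ℝ≥0` constructor
  have : IsProbabilityMeasure (gaussianReal (μ n) ⟨σ ^ 2, sq_nonneg σ⟩) :=
    instIsProbabilityMeasureGaussianReal _ _
  have hR_sub :
      R n' ⊆ {s | p n * gaussianDensity (μ n) σ s ≤ p n' * gaussianDensity (μ n') σ s} :=
    fun s hs ↦ (hR n' ▸ hs) n
  calc ((gaussianReal (μ n) ⟨σ ^ 2, sq_nonneg σ⟩) (R n')).toReal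
      ≤ ((gaussianReal (μ n) ⟨σ ^ 2, sq_nonneg σ⟩)
          {s | p n * gaussianDensity (μ n) σ s ≤ p n' * gaussianDensity (μ n') σ s}).toReal :=
        measureReal_mono hR_sub (measure_ne_top _ _)
    _ = stdNormalTail (d n n') := by
        rw [gaussianReal_setOf_mul_gaussianDensity_le hσ (hμ.ne hne) (hp n) (hp n'), hd n n' hne]

/-- Union-bound inequality behind Proposition 2: the exact misclassification loss of
the MAP decision rule under Gaussian observations is upper-bounded by the approximate
localization loss `l_a`, a weighted sum of standard normal tail values `Q(d_{n,n'})`. -/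
theorem union_bound_approximate_loss
    {N : Type*} [Fintype N] [DecidableEq N] (hN : 2 ≤ Fintype.card N)
    (σ : ℝ) (hσ : 0 < σ)
    (μ : N → ℝ) (hμ : Function.Injective μ)
    (p : N → ℝ) (hp : ∀ n, 0 < p n)
    (γ : N → N → ℝ) (hγ : ∀ n n', 0 ≤ γ n n')
    (R : N → Set ℝ)
    (hR : ∀ n', R n' = {s : ℝ | ∀ m : N,
      p m * gaussianDensity (μ m) σ s ≤ p n' * gaussianDensity (μ n') σ s})
    (d : N → N → ℝ)
    (hd : ∀ n n', n ≠ n' →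
      d n n' = ((μ n' - μ n) ^ 2 - 2 * σ ^ 2 * Real.log (p n' / p n)) /
        (2 * σ * |μ n' - μ n|)) :
    ∑ n : N, p n * ∑ n' ∈ Finset.univ \ {n}, γ n n' *
        ((gaussianReal (μ n) ⟨σ ^ 2, sq_nonneg σ⟩) (R n')).toReal ≤
      ∑ n : N, p n * ∑ n' ∈ Finset.univ \ {n}, γ n n' * stdNormalTail (d n n') :=
  union_bound_approximate_loss_general σ hσ μ hμ p hp γ hγ R hR d hd
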